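/- If μ ≠ 0 and T(u, φ) = μ(u, φ) with u = 0, then φ = 0; i.e., no eigenfunction of T associated with a nonzero eigenvalue has vanishing first component. -/
import Mathlib


/-- **No eigenfunction of the solution operator with nonzero eigenvalue has vanishing
first component.** Here `T` is the solution operator of the transmission problem:
`a(T z, w) = b(z, w)` where `a((u,φ),(v,ψ)) = a^Δ(u,v) + a^∇(φ,ψ)` is block diagonal,
`a^∇` is definite, and `b((0,φ),(0,ψ)) = 0` (the last term of `b` carries a factor `u`).
If `μ ≠ 0` and `T (0, φ) = μ • (0, φ)`, then `φ = 0`. -/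
theorem stmt5 {V W : Type*} [NormedAddCommGroup V] [InnerProductSpace ℂ V]
    [NormedAddCommGroup W] [InnerProductSpace ℂ W]
    (aD : V → V → ℂ) (aN : W → W → ℂ)
    (haD0 : ∀ x : V, aD x 0 = 0)
    (haN_smul : ∀ (c : ℂ) (x y : W), aN (c • x) y = c * aN x y)
    (haN_def : ∀ ψ : W, aN ψ ψ = 0 → ψ = 0)
    (b : V × W → V × W → ℂ)
    (hb0 : ∀ φ ψ : W, b (0, φ) (0, ψ) = 0)
    (T : V × W → V × W)
    (hT : ∀ z v : V × W, aD (T z).1 v.1 + aN (T z).2 v.2 = b z v)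
    (μ : ℂ) (hμ : μ ≠ 0) (φ : W)
    (heig : T (0, φ) = μ • ((0 : V), φ)) : φ = 0 := by
  have h := hT (0, φ) (0, φ)
  rw [heig] at h
  simp only [Prod.smul_mk, smul_zero, haD0, hb0, haN_smul, zero_add] at h
  exact haN_def φ ((mul_eq_zero.1 h).resolve_left hμ)
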